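/- For all positive integers n and k, the following polynomial identity in z holds: Σ_s b(n,k,s) z^s equals the sum, over all partitions π = (b_1, ..., b_k) of n into exactly k parts satisfying b_i − b_{i+1} ≥ 2 for 1 ≤ i ≤ k−1 and b_k ≥ 1, of (1+z)^{t(π)}, where t(π) = #{1 ≤ i ≤ k−1 : b_i − b_{i+1} > 2} + (1 if b_k > 1, and 0 if b_k = 1). -/

import Mathlib

open Finset
open scoped Classical

namespace BasisPartitions

/-! ### Ordinary partitions -/

/-- The parts of a partition, listed in weakly decreasing order. -/
def sparts {n : ℕ} (π : n.Partition) : List ℕ := π.parts.sort (· ≥ ·)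

/-- `conj L j` is the number of parts that are `≥ j`, i.e. the `j`-th part of the
conjugate partition (for `j ≥ 1`). -/
def conj (L : List ℕ) (j : ℕ) : ℕ := L.countP (fun b => j ≤ b)

/-- The Durfee square size: the largest `k` such that the `k`-th part is `≥ k`. -/
def durfee (L : List ℕ) : ℕ := (List.range L.length).countP (fun i => i + 1 ≤ L.getD i 0)

/-- The `(i+1)`-st successive rank `r_{i+1} = b_{i+1} - c_{i+1}` (0-indexed `i`). -/
def rank (L : List ℕ) (i : ℕ) : ℤ := (L.getD i 0 : ℤ) - (conj L (i + 1) : ℤ)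

/-- The successive rank vector `(r_1, ..., r_k)` where `k` is the Durfee square size. -/
def ranks (L : List ℕ) : List ℤ := (List.range (durfee L)).map (rank L)

/-- A basis partition: the partitioned number is minimal among all partitions having
the same successive rank vector. -/
def IsBasis {n : ℕ} (π : n.Partition) : Prop :=
  ∀ (m : ℕ) (π' : m.Partition), ranks (sparts π') = ranks (sparts π) → n ≤ m

/-- The signature: the number of distinct part sizes below the Durfee square. -/
def sig (L : List ℕ) : ℕ := ((L.drop (durfee L)).dedup).length

/-- `b(n;k)`: the number of basis partitions of `n` with Durfee square size `k`. -/
noncomputable def bCount (n k : ℕ) : ℕ :=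
  Nat.card {π : n.Partition // IsBasis π ∧ durfee (sparts π) = k}

/-- `b(n,k,s)`: the number of basis partitions of `n` with Durfee square size `k`
and signature `s`. -/
noncomputable def bCount3 (n k s : ℕ) : ℕ :=
  Nat.card {π : n.Partition // IsBasis π ∧ durfee (sparts π) = k ∧ sig (sparts π) = s}

/-- `B(n;j)`: the number of basis partitions of `n` with signature `j`. -/
noncomputable def BCount (n j : ℕ) : ℕ :=
  Nat.card {π : n.Partition // IsBasis π ∧ sig (sparts π) = j}

/-- Rogers–Ramanujan condition: exactly `k` parts, consecutive gaps `≥ 2`, last part `≥ 1`. -/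
def RR (L : List ℕ) (k : ℕ) : Prop :=
  L.length = k ∧ (∀ i, i + 1 < k → L.getD (i + 1) 0 + 2 ≤ L.getD i 0) ∧ 1 ≤ L.getD (k - 1) 0

/-- `t(π)` for a Rogers–Ramanujan partition: the number of gaps `> 2`, plus 1 if the
last part is `> 1`. -/
def tRR (L : List ℕ) (k : ℕ) : ℕ :=
  ((Finset.range (k - 1)).filter (fun i => L.getD (i + 1) 0 + 2 < L.getD i 0)).card +
    (if 1 < L.getD (k - 1) 0 then 1 else 0)

/-- Primary condition: exactly `k` parts, each part `≥ k`. -/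
def Primary (L : List ℕ) (k : ℕ) : Prop := L.length = k ∧ ∀ x ∈ L, k ≤ x

/-- `t(π)` for a primary partition: the number of strict descents, plus 1 if the
last part is `> k`. -/
def tP (L : List ℕ) (k : ℕ) : ℕ :=
  ((Finset.range (k - 1)).filter (fun i => L.getD (i + 1) 0 < L.getD i 0)).card +
    (if k < L.getD (k - 1) 0 then 1 else 0)

/-- A complete basis partition: every `j` with `1 ≤ j ≤ k-1` occurs as a part of `π_b`
(a row below the Durfee square) or as a part of `π_r` (a column length strictly to the
right of the Durfee square). -/
def IsComplete {n : ℕ} (π : n.Partition) : Prop :=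
  ∀ j : ℕ, 1 ≤ j → j < durfee (sparts π) →
    j ∈ (sparts π).drop (durfee (sparts π)) ∨
      ∃ c : ℕ, durfee (sparts π) < c ∧ conj (sparts π) c = j

/-- `b_c(n)`: the number of complete basis partitions of `n`. -/
noncomputable def bc (n : ℕ) : ℕ := Nat.card {π : n.Partition // IsBasis π ∧ IsComplete π}

/-! ### Partitions with non-repeating odd parts and their 2-modular graphs -/

/-- Partitions with non-repeating (distinct) odd parts. -/
def Pod {n : ℕ} (π : n.Partition) : Prop := ∀ x, Odd x → π.parts.count x ≤ 1

/-- The size (sum of entries) of the `c`-th column (1-indexed) of the 2-modular graph. -/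
def mcolSize (L : List ℕ) (c : ℕ) : ℕ :=
  (L.map (fun x => if 2 * c ≤ x then 2 else if x = 2 * c - 1 then 1 else 0)).sum

/-- The length (number of entries) of the `c`-th column (1-indexed) of the 2-modular graph. -/
def mcolLen (L : List ℕ) (c : ℕ) : ℕ := L.countP (fun x => 2 * c - 1 ≤ x)

/-- The number of entries in a row of the 2-modular graph recording the part `x`,
namely `⌈x/2⌉`. -/
def mrowLen (x : ℕ) : ℕ := (x + 1) / 2

/-- The 2-modular Durfee square size: the largest `k` with `⌈b_k/2⌉ ≥ k`. -/
def mdurfee (L : List ℕ) : ℕ := (List.range L.length).countP (fun i => 2 * i + 1 ≤ L.getD i 0)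

/-- The `(i+1)`-st 2-modular successive rank: (size of row `i+1`) − (size of column `i+1`). -/
def mrank (L : List ℕ) (i : ℕ) : ℤ := (L.getD i 0 : ℤ) - (mcolSize L (i + 1) : ℤ)

/-- The 2-modular successive rank vector. -/
def mranks (L : List ℕ) : List ℤ := (List.range (mdurfee L)).map (mrank L)

/-- A minimal basis partition in `P_{o,d}`: the partitioned number is minimal among all
partitions with non-repeating odd parts having the same 2-modular successive rank vector. -/
def MinBasis {n : ℕ} (μ : n.Partition) : Prop :=
  Pod μ ∧ ∀ (m : ℕ) (μ' : m.Partition), Pod μ' →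
    mranks (sparts μ') = mranks (sparts μ) → n ≤ m

/-- A basis partition in `P_{o,d}`: no row of the 2-modular graph strictly below the Durfee
square has size equal to the size of a column strictly to the right of the Durfee square. -/
def PodBasis {n : ℕ} (π : n.Partition) : Prop :=
  Pod π ∧ ∀ i, mdurfee (sparts π) ≤ i → i < (sparts π).length →
    ∀ c, mdurfee (sparts π) < c → mcolSize (sparts π) c ≠ (sparts π).getD i 0

/-- The signature of a basis partition in `P_{o,d}`: the number of distinct sizes among the
rows of the 2-modular graph strictly below the Durfee square. -/
def msig (L : List ℕ) : ℕ := ((L.drop (mdurfee L)).dedup).length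

/-- The ℓ-signature: the number of distinct lengths among the rows of the 2-modular
graph strictly below the Durfee square. -/
def lsig (L : List ℕ) : ℕ := (((L.drop (mdurfee L)).map mrowLen).dedup).length

/-- `b(n;j)` for `P_{o,d}`: the number of basis partitions of `n` in `P_{o,d}` with
signature `j`. -/
noncomputable def podB (n j : ℕ) : ℕ := Nat.card {π : n.Partition // PodBasis π ∧ msig (sparts π) = j}

/-- The number of odd parts. -/
def numOdd (L : List ℕ) : ℕ := L.countP (fun x => x % 2 = 1)

/-- A special partition: distinct parts with consecutive differences `≥ 4`, where a
difference equal to `4` is permitted only when both parts are even. -/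
def Special (L : List ℕ) : Prop :=
  ∀ i, i + 1 < L.length →
    L.getD (i + 1) 0 + 4 ≤ L.getD i 0 ∧
      (L.getD i 0 = L.getD (i + 1) 0 + 4 → Even (L.getD i 0) ∧ Even (L.getD (i + 1) 0))

/-- The `i`-th part of a special partition, with the convention that the part just after
the last one is `-2`. -/
def hpart (L : List ℕ) (i : ℕ) : ℤ := if i < L.length then (L.getD i 0 : ℤ) else -2

/-- `ℓ(π)`: the number of gaps `> 4` in a special partition, with the convention
`h_{k+1} = -2`. -/
def ell (L : List ℕ) : ℕ :=
  ((Finset.range L.length).filter (fun i => 4 < hpart L i - hpart L (i + 1))).card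


/-!
Record a partition with Durfee square of side `k` by the lengths `g i` of the rows to the right
of the square and `h i` of the columns below it. Both are partitions into at most `k` parts,
`n = k² + ∑ g + ∑ h`, and the successive ranks are `g i - h i`. The partition is a basis
partition iff `g` and `h` have no common descent: at a common descent `i`, shortening the
first `i + 1` rows and columns keeps the ranks and lowers `n`, while without common descents
`(g, h)` is the pointwise least pair with its differences. Its signature is the number of
descents of `h`.

Adding `e = g + h` to the staircase `2k - 1, 2k - 3, …, 1` gives a Rogers–Ramanujan partition
`ρ` into `k` parts, and `t(ρ)` is the number of descents of `e`. Without common descents these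
are the disjoint union of the descents of `g` and of `h`, and `(g, h)` is recovered from `e` and
the descents of `h`. So basis partitions with Durfee square `k` and signature `s` correspond to
pairs of such a `ρ` and an `s`-element subset of its `t(ρ)` descents, and
`∑ S ⊆ D, z ^ #S = (1 + z) ^ #D`.
-/

lemma countP_range_lt (N m : ℕ) : (List.range N).countP (· < m) = min N m := by
  induction N with
  | zero => simp
  | succ N ih =>
    rw [List.range_succ, List.countP_append, ih]
    by_cases h : N < m <;> simp [h] <;> omega

lemma iff_lt_countP_range {p : ℕ → Prop} [DecidablePred p] {N : ℕ}
    (hp : ∀ i j, i ≤ j → p j → p i) (hN : ∀ i, p i → i < N) (i : ℕ) :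
    p i ↔ i < (List.range N).countP (p ·) := by
  have hex : ∃ m, ¬ p m := ⟨N, fun h => lt_irrefl N (hN N h)⟩
  have hm : ∀ i, p i ↔ i < Nat.find hex := fun i =>
    ⟨fun h => by_contra fun hi => Nat.find_spec hex (hp _ _ (not_lt.mp hi) h),
     fun h => by simpa using Nat.find_min hex h⟩
  have hmN : Nat.find hex ≤ N := Nat.find_min' hex fun h => lt_irrefl N (hN N h)
  rw [List.countP_congr (q := (· < Nat.find hex)) fun j _ => by simpa using hm j,
    countP_range_lt, min_eq_right hmN, hm]

lemma countP_range_le (p : ℕ → Bool) (k : ℕ) : (List.range k).countP p ≤ k := by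
  simpa using List.countP_le_length (l := List.range k) (p := p)

lemma countP_range_eq_card_filter (p : ℕ → Prop) [DecidablePred p] (n : ℕ) :
    (List.range n).countP (p ·) = #{i ∈ range n | p i} := by
  rw [card_def, filter_val, range_val, Multiset.range, Multiset.filter_coe, Multiset.coe_card,
    List.countP_eq_length_filter]

lemma sum_map_range (f : ℕ → ℕ) (n : ℕ) :
    ((List.range n).map f).sum = ∑ i ∈ range n, f i := by
  rw [sum_eq_multiset_sum, range_val, Multiset.range, Multiset.map_coe, Multiset.sum_coe]

lemma pairwise_map_range {f : ℕ → ℕ} (hf : Antitone f) (n : ℕ) :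
    ((List.range n).map f).Pairwise (· ≥ ·) :=
  List.pairwise_map.mpr (List.pairwise_lt_range.imp fun h => hf h.le)

lemma getD_le_of_forall_le {M : List ℕ} {b : ℕ} (h : ∀ x ∈ M, x ≤ b) (i : ℕ) :
    M.getD i 0 ≤ b := by
  rcases lt_or_ge i M.length with hi | hi
  · rw [List.getD_eq_getElem _ _ hi]; exact h _ (List.getElem_mem hi)
  · rw [List.getD_eq_default _ _ hi]; exact Nat.zero_le _

lemma mem_iff_exists_getD {L : List ℕ} {x : ℕ} (hx : 0 < x) :
    x ∈ L ↔ ∃ i, L.getD i 0 = x := by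
  rw [List.mem_iff_getElem]
  refine ⟨fun ⟨i, hi, h⟩ => ⟨i, by rw [List.getD_eq_getElem _ _ hi, h]⟩,
    fun ⟨i, h⟩ => ?_⟩
  have hi : i < L.length := by_contra fun hi => by
    rw [List.getD_eq_default _ _ (not_lt.mp hi)] at h; omega
  exact ⟨i, hi, by rw [← h, List.getD_eq_getElem _ _ hi]⟩

section PositiveList

variable {L : List ℕ} (hpos : ∀ x ∈ L, 0 < x)
include hpos

lemma getD_pos_iff (i : ℕ) : 0 < L.getD i 0 ↔ i < L.length := by
  refine ⟨fun h => by_contra fun hi => ?_, fun h => ?_⟩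
  · rw [List.getD_eq_default _ _ (not_lt.mp hi)] at h
    exact lt_irrefl 0 h
  · rw [List.getD_eq_getElem _ _ h]
    exact hpos _ (List.getElem_mem h)

lemma eq_of_getD_eq {L' : List ℕ} (hpos' : ∀ x ∈ L', 0 < x)
    (h : ∀ i, L.getD i 0 = L'.getD i 0) : L = L' := by
  have hlen : L.length = L'.length := eq_of_forall_lt_iff fun i => by
    rw [← getD_pos_iff hpos, ← getD_pos_iff hpos', h]
  refine List.ext_getElem hlen fun i h₁ h₂ => ?_
  rw [← List.getD_eq_getElem _ 0 h₁, ← List.getD_eq_getElem _ 0 h₂, h]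

end PositiveList

@[elab_as_elim]
lemma forall_of_forall_ge_of_step {k : ℕ} {P : ℕ → Prop} (ge : ∀ i, k ≤ i → P i)
    (step : ∀ i < k, P (i + 1) → P i) (i : ℕ) : P i := by
  rcases le_or_gt k i with hi | hi
  · exact ge i hi
  · exact Nat.decreasingInduction (motive := fun m _ => P m) (fun j hj ih => step j hj ih)
      (ge k le_rfl) hi.le

section SortedList

variable {L : List ℕ} (hL : L.Pairwise (· ≥ ·))
include hL

lemma lt_getD_iff_lt_conj (i j : ℕ) : j < L.getD i 0 ↔ i < conj L (j + 1) := by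
  induction L generalizing i with
  | nil => simp [conj]
  | cons a T ih =>
    have ha : ∀ b ∈ T, b ≤ a := fun b hb => List.rel_of_pairwise_cons hL hb
    have hconj : conj (a :: T) (j + 1) = conj T (j + 1) + if j < a then 1 else 0 := by
      simp [conj, List.countP_cons]
    cases i with
    | zero =>
      rw [List.getD_cons_zero, hconj]
      refine ⟨fun h => by simp [h], fun h => by_contra fun hja => ?_⟩
      rw [if_neg hja, add_zero] at h
      obtain ⟨b, hb, hjb⟩ := List.countP_pos_iff.mp h
      exact hja (lt_of_lt_of_le (by simpa [Nat.succ_le_iff] using hjb) (ha b hb))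
    | succ i =>
      rw [List.getD_cons_succ, hconj, ih hL.of_cons]
      by_cases hja : j < a
      · simp [hja]
      · have : conj T (j + 1) = 0 := List.countP_eq_zero.mpr fun b hb hjb =>
          hja (lt_of_lt_of_le (by simpa [Nat.succ_le_iff] using hjb) (ha b hb))
        simp [hja, this]

lemma antitone_getD : Antitone (L.getD · 0) := by
  intro i i' hii'
  by_contra! h
  have := (lt_getD_iff_lt_conj hL i' (L.getD i 0)).mp h
  exact lt_irrefl _ ((lt_getD_iff_lt_conj hL i (L.getD i 0)).mpr (by omega))

lemma lt_getD_iff_lt_durfee (i : ℕ) : i < L.getD i 0 ↔ i < durfee L :=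
  iff_lt_countP_range (p := fun i => i < L.getD i 0)
    (fun _ _ hij h => lt_of_le_of_lt hij (lt_of_lt_of_le h (antitone_getD hL hij)))
    (fun i h => by_contra fun hi => by rw [List.getD_eq_default _ _ (not_lt.mp hi)] at h; omega) i

lemma exists_getD_eq_iff (k j : ℕ) :
    (∃ i, k ≤ i ∧ L.getD i 0 = j + 1) ↔
      k < conj L (j + 1) ∧ conj L (j + 1 + 1) < conj L (j + 1) := by
  have key : ∀ i, L.getD i 0 = j + 1 ↔ conj L (j + 1 + 1) ≤ i ∧ i < conj L (j + 1) :=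
    fun i => by
      rw [← lt_getD_iff_lt_conj hL, ← not_lt, ← lt_getD_iff_lt_conj hL]
      omega
  simp only [key]
  exact ⟨fun ⟨i, _, _, _⟩ => by omega, fun _ => ⟨max k (conj L (j + 1 + 1)), by omega⟩⟩

end SortedList

lemma antitone_conj (L : List ℕ) : Antitone (conj L) := fun _ _ h =>
  List.countP_mono_left fun _ _ hx => by simp only [decide_eq_true_eq] at *; omega

/-- A partition into at most `k` parts, as a sequence. -/
def IsProfile (k : ℕ) (f : ℕ → ℕ) : Prop := Antitone f ∧ ∀ i, k ≤ i → f i = 0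

def descents (k : ℕ) (f : ℕ → ℕ) : Finset ℕ := (range k).filter fun i => f (i + 1) < f i

/-- The sequence that drops exactly like `e` at the positions in `S` and is constant elsewhere. -/
def descentPart (e : ℕ → ℕ) (S : Finset ℕ) (i : ℕ) : ℕ :=
  ∑ j ∈ S with i ≤ j, (e j - e (j + 1))

section Profile

variable {k : ℕ} {f g h e : ℕ → ℕ}

lemma IsProfile.mem_descents (hf : IsProfile k f) {i : ℕ} :
    i ∈ descents k f ↔ f (i + 1) < f i := by
  rw [descents, mem_filter, mem_range, and_iff_right_iff_imp]
  intro h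
  by_contra! hi
  rw [hf.2 i hi] at h
  omega

lemma IsProfile.add (hg : IsProfile k g) (hh : IsProfile k h) : IsProfile k (g + h) :=
  ⟨hg.1.add hh.1, fun i hi => by simp [hg.2 i hi, hh.2 i hi]⟩

lemma descents_subset_descents_add (hg : Antitone g) : descents k h ⊆ descents k (g + h) := by
  intro i hi
  simp only [descents, mem_filter, Pi.add_apply] at hi ⊢
  have : g (i + 1) ≤ g i := hg (Nat.le_succ i)
  exact ⟨hi.1, by omega⟩

/-- `heq` says that `g - h = g' - h'`. -/
lemma le_of_add_eq_add (hg : IsProfile k g) (hh : IsProfile k h) {g' h' : ℕ → ℕ}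
    (hg' : Antitone g') (hh' : Antitone h') (hdisj : Disjoint (descents k g) (descents k h))
    (heq : ∀ i, g i + h' i = g' i + h i) (i : ℕ) : g i ≤ g' i ∧ h i ≤ h' i := by
  induction i using forall_of_forall_ge_of_step (k := k) with
  | ge i hi => simp [hg.2 i hi, hh.2 i hi]
  | step i _ ih =>
    have : g (i + 1) ≤ g i := hg.1 (Nat.le_succ i)
    have : h (i + 1) ≤ h i := hh.1 (Nat.le_succ i)
    have : g' (i + 1) ≤ g' i := hg' (Nat.le_succ i)
    have : h' (i + 1) ≤ h' i := hh' (Nat.le_succ i)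
    have := heq i
    have : ¬ (g (i + 1) < g i ∧ h (i + 1) < h i) := fun ⟨h₁, h₂⟩ =>
      disjoint_left.mp hdisj (hg.mem_descents.mpr h₁) (hh.mem_descents.mpr h₂)
    omega

lemma IsProfile.exists_eq_add_indicator (hf : IsProfile k f) {i : ℕ} (hi : i ∈ descents k f) :
    ∃ f', IsProfile k f' ∧ ∀ j, f j = f' j + if j ≤ i then 1 else 0 := by
  rw [hf.mem_descents] at hi
  refine ⟨fun j => f j - if j ≤ i then 1 else 0, ⟨fun j j' hjj' => ?_, fun j hj => ?_⟩,
    fun j => ?_⟩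
  · have : f j' ≤ f j := hf.1 hjj'
    dsimp only
    split_ifs with hj' hj hj
    · omega
    · omega
    · have : f j' ≤ f (i + 1) := hf.1 (by omega)
      have : f i ≤ f j := hf.1 hj
      omega
    · omega
  · simp [hf.2 j hj]
  · dsimp only
    split_ifs with hj
    · have : f i ≤ f j := hf.1 hj
      omega
    · rfl

lemma descentPart_eq (e : ℕ → ℕ) (S : Finset ℕ) (i : ℕ) :
    descentPart e S i = (if i ∈ S then e i - e (i + 1) else 0) + descentPart e S (i + 1) := by
  simp only [descentPart, sum_filter]
  rw [← sum_ite_eq' S i (fun j => e j - e (j + 1)), ← sum_add_distrib]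
  refine sum_congr rfl fun j _ => ?_
  split_ifs <;> omega

section DescentPart

variable {S : Finset ℕ}

lemma descentPart_of_le (hS : S ⊆ descents k e) {i : ℕ} (hi : k ≤ i) :
    descentPart e S i = 0 :=
  sum_eq_zero fun j hj => by
    have := mem_range.mp (mem_filter.mp (hS (mem_filter.mp hj).1)).1
    have := (mem_filter.mp hj).2
    omega

lemma isProfile_descentPart (hS : S ⊆ descents k e) : IsProfile k (descentPart e S) :=
  ⟨antitone_nat_of_succ_le fun i => by rw [descentPart_eq e S i]; omega,
   fun _ hi => descentPart_of_le hS hi⟩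

variable (he : IsProfile k e) (hS : S ⊆ descents k e)
include he hS

lemma descentPart_le (i : ℕ) : descentPart e S i ≤ e i := by
  induction i using forall_of_forall_ge_of_step (k := k) with
  | ge i hi => rw [descentPart_of_le hS hi]; omega
  | step i _ ih =>
    have : e (i + 1) ≤ e i := he.1 (Nat.le_succ i)
    rw [descentPart_eq]
    split_ifs <;> omega

lemma isProfile_sub_descentPart : IsProfile k (e - descentPart e S) := by
  refine ⟨antitone_nat_of_succ_le fun i => ?_, fun i hi => by simp [he.2 i hi]⟩
  have : e (i + 1) ≤ e i := he.1 (Nat.le_succ i)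
  have := descentPart_le he hS (i + 1)
  simp only [Pi.sub_apply]
  rw [descentPart_eq e S i]
  split_ifs <;> omega

lemma descents_descentPart : descents k (descentPart e S) = S := by
  ext i
  rw [(isProfile_descentPart hS).mem_descents, descentPart_eq e S i]
  by_cases hi : i ∈ S
  · have := he.mem_descents.mp (hS hi)
    simp only [hi, if_true, iff_true]
    omega
  · simp [hi]

lemma disjoint_descents_descentPart :
    Disjoint (descents k (e - descentPart e S)) (descents k (descentPart e S)) := by
  rw [descents_descentPart he hS, disjoint_right]
  intro i hi hi'
  rw [(isProfile_sub_descentPart he hS).mem_descents, Pi.sub_apply, Pi.sub_apply,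
    descentPart_eq e S i, if_pos hi] at hi'
  have := descentPart_le he hS (i + 1)
  have := he.mem_descents.mp (hS hi)
  omega

end DescentPart

lemma descentPart_add (hg : IsProfile k g) (hh : IsProfile k h)
    (hdisj : Disjoint (descents k g) (descents k h)) : descentPart (g + h) (descents k h) = h := by
  have hS := descents_subset_descents_add (k := k) (h := h) hg.1
  funext i
  induction i using forall_of_forall_ge_of_step (k := k) with
  | ge i hi => rw [descentPart_of_le hS hi, hh.2 i hi]
  | step i _ ih =>
    have : g (i + 1) ≤ g i := hg.1 (Nat.le_succ i)
    have : h (i + 1) ≤ h i := hh.1 (Nat.le_succ i)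
    rw [descentPart_eq, ih, Pi.add_apply, Pi.add_apply]
    by_cases hi : i ∈ descents k h
    · have := hh.mem_descents.mp hi
      have := (hg.mem_descents (i := i)).not.mp (disjoint_right.mp hdisj hi)
      rw [if_pos hi]
      omega
    · have := (hh.mem_descents (i := i)).not.mp hi
      rw [if_neg hi]
      omega

end Profile

/-- Lengths of the rows to the right of a Durfee square of side `k`. -/
def rowExcess (L : List ℕ) (k i : ℕ) : ℕ := L.getD i 0 - k

/-- Lengths of the columns below a Durfee square of side `k`. -/
def colExcess (L : List ℕ) (k i : ℕ) : ℕ := conj L (i + 1) - k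

section DurfeeSquare

variable {L : List ℕ} {k : ℕ} (hL : L.Pairwise (· ≥ ·)) (hd : durfee L = k)
include hL hd

lemma getD_le_of_durfee_le {i : ℕ} (hi : k ≤ i) : L.getD i 0 ≤ k := by
  have := (lt_getD_iff_lt_durfee hL k).not.mpr (by omega)
  have : L.getD i 0 ≤ L.getD k 0 := antitone_getD hL hi
  omega

lemma conj_le_of_durfee_le {j : ℕ} (hj : k ≤ j) : conj L (j + 1) ≤ k := by
  by_contra! h
  have := (lt_getD_iff_lt_conj hL k j).mpr h
  have := getD_le_of_durfee_le hL hd (le_refl k)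
  omega

lemma isProfile_rowExcess : IsProfile k (rowExcess L k) :=
  ⟨fun _ _ h => Nat.sub_le_sub_right (antitone_getD hL h) k,
   fun _ hi => Nat.sub_eq_zero_of_le (getD_le_of_durfee_le hL hd hi)⟩

lemma isProfile_colExcess : IsProfile k (colExcess L k) :=
  ⟨fun _ _ h => Nat.sub_le_sub_right (antitone_conj L (by omega)) k,
   fun _ hi => Nat.sub_eq_zero_of_le (conj_le_of_durfee_le hL hd hi)⟩

/-- A part `j + 1` lies below the Durfee square iff column `j + 1` is longer than column `j + 2`. -/
lemma sig_eq_card_descents (hpos : ∀ x ∈ L, 0 < x) : sig L = #(descents k (colExcess L k)) := by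
  have hdrop : (L.drop k).toFinset = (descents k (colExcess L k)).image (· + 1) := by
    ext x
    simp only [List.mem_toFinset, Finset.mem_image, descents, Finset.mem_filter, Finset.mem_range]
    have getD_drop : ∀ i, (L.drop k).getD i 0 = L.getD (k + i) 0 := fun i => by
      simp [List.getD_eq_getElem?_getD, List.getElem?_drop]
    constructor
    · intro hx
      have hx0 : 0 < x := hpos x (List.mem_of_mem_drop hx)
      obtain ⟨j, rfl⟩ : ∃ j, x = j + 1 := ⟨x - 1, by omega⟩
      obtain ⟨i, hi⟩ := (mem_iff_exists_getD hx0).mp hx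
      have hjk : j + 1 ≤ k := hi ▸ getD_drop i ▸ getD_le_of_durfee_le hL hd (by omega)
      have := (exists_getD_eq_iff hL k j).mp ⟨k + i, by omega, by rwa [← getD_drop]⟩
      exact ⟨j, ⟨by omega, by simp only [colExcess]; omega⟩, rfl⟩
    · rintro ⟨j, ⟨hj, hdesc⟩, rfl⟩
      simp only [colExcess] at hdesc
      obtain ⟨i, hki, hi⟩ := (exists_getD_eq_iff hL k j).mpr (by omega)
      refine (mem_iff_exists_getD (by omega)).mpr ⟨i - k, ?_⟩
      rw [getD_drop, ← hi, Nat.add_sub_cancel' hki]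
  rw [sig, hd, ← List.card_toFinset, hdrop,
    Finset.card_image_of_injective _ (add_left_injective 1)]

variable (hk : 0 < k)
include hk

lemma le_getD_of_lt_durfee {i : ℕ} (hi : i < k) : k ≤ L.getD i 0 := by
  have := (lt_getD_iff_lt_durfee hL (k - 1)).mpr (by omega)
  have : L.getD (k - 1) 0 ≤ L.getD i 0 := antitone_getD hL (by omega)
  omega

lemma le_conj_of_lt_durfee {j : ℕ} (hj : j < k) : k ≤ conj L (j + 1) := by
  have := (lt_getD_iff_lt_conj hL (k - 1) j).mp
    (by have := le_getD_of_lt_durfee hL hd hk (show k - 1 < k by omega); omega)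
  omega

lemma getD_eq_add_rowExcess {i : ℕ} (hi : i < k) : L.getD i 0 = k + rowExcess L k i := by
  have := le_getD_of_lt_durfee hL hd hk hi
  rw [rowExcess]; omega

lemma conj_eq_add_colExcess {j : ℕ} (hj : j < k) : conj L (j + 1) = k + colExcess L k j := by
  have := le_conj_of_lt_durfee hL hd hk hj
  rw [colExcess]; omega

lemma ranks_eq_map_excess :
    ranks L = (List.range k).map fun i => (rowExcess L k i : ℤ) - colExcess L k i := by
  rw [ranks, hd]
  refine List.map_congr_left fun i hi => ?_
  rw [List.mem_range] at hi
  rw [rank, getD_eq_add_rowExcess hL hd hk hi, conj_eq_add_colExcess hL hd hk hi]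
  push_cast
  ring

end DurfeeSquare

/-- The parts below the Durfee square form the conjugate of `h`. -/
def ofExcess (k : ℕ) (g h : ℕ → ℕ) : List ℕ :=
  (List.range k).map (k + g ·) ++ (List.range (h 0)).map fun r => (List.range k).countP (r < h ·)

section OfExcess

variable {k : ℕ} {g h : ℕ → ℕ}

lemma ofExcess_getD_of_lt {i : ℕ} (hi : i < k) : (ofExcess k g h).getD i 0 = k + g i := by
  rw [ofExcess, List.getD_append _ _ _ _ (by simpa using hi),
    List.getD_eq_getElem _ _ (by simpa using hi)]
  simp

lemma ofExcess_getD_le {i : ℕ} (hi : k ≤ i) : (ofExcess k g h).getD i 0 ≤ k := by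
  rw [ofExcess, List.getD_append_right _ _ _ _ (by simpa using hi)]
  refine getD_le_of_forall_le (fun x hx => ?_) _
  obtain ⟨r, -, rfl⟩ := List.mem_map.mp hx
  exact countP_range_le _ k

variable (hg : IsProfile k g) (hh : IsProfile k h)

include hg in
lemma ofExcess_sorted : (ofExcess k g h).Pairwise (· ≥ ·) := by
  refine List.pairwise_append.mpr ⟨pairwise_map_range (fun _ _ hij => by
    have := hg.1 hij; omega) k, pairwise_map_range (fun _ _ hrs => List.countP_mono_left
    fun _ _ h => by simp only [decide_eq_true_eq] at *; omega) _, ?_⟩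
  simp only [List.mem_map, List.mem_range]
  rintro _ ⟨i, -, rfl⟩ _ ⟨r, -, rfl⟩
  exact le_add_right (countP_range_le _ k)

lemma ofExcess_pos (hk : 0 < k) : ∀ x ∈ ofExcess k g h, 0 < x := by
  simp only [ofExcess, List.mem_append, List.mem_map, List.mem_range]
  rintro _ (⟨i, -, rfl⟩ | ⟨r, hr, rfl⟩)
  · omega
  · exact List.countP_pos_iff.mpr ⟨0, List.mem_range.mpr hk, by simpa using hr⟩

include hh in
lemma ofExcess_conj {j : ℕ} (hj : j < k) : conj (ofExcess k g h) (j + 1) = k + h j := by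
  have hrow : ∀ r, j < (List.range k).countP (r < h ·) ↔ r < h j := fun r =>
    (iff_lt_countP_range (p := (r < h ·)) (fun _ _ hij hr => lt_of_lt_of_le hr (hh.1 hij))
      (fun i hi => by_contra fun hik => by rw [hh.2 i (not_lt.mp hik)] at hi; omega) j).symm
  rw [conj, ofExcess, List.countP_append, List.countP_map, List.countP_map,
    List.countP_eq_length.mpr (fun i _ => by simp; omega),
    List.length_range]
  rw [List.countP_congr (q := (· < h j)) fun r _ => by simpa using hrow r, countP_range_lt,
    min_eq_right (hh.1 (Nat.zero_le j))]

include hg in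
lemma durfee_ofExcess : durfee (ofExcess k g h) = k :=
  eq_of_forall_lt_iff fun i => by
    rw [← lt_getD_iff_lt_durfee (ofExcess_sorted hg)]
    rcases lt_or_ge i k with hi | hi
    · rw [ofExcess_getD_of_lt hi]; omega
    · have := ofExcess_getD_le (g := g) (h := h) hi; omega

include hg in
lemma rowExcess_ofExcess : rowExcess (ofExcess k g h) k = g := funext fun i => by
  rcases lt_or_ge i k with hi | hi
  · rw [rowExcess, ofExcess_getD_of_lt hi]; omega
  · rw [rowExcess, hg.2 i hi, Nat.sub_eq_zero_of_le (ofExcess_getD_le hi)]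

include hg hh in
lemma colExcess_ofExcess : colExcess (ofExcess k g h) k = h := funext fun j => by
  rcases lt_or_ge j k with hj | hj
  · rw [colExcess, ofExcess_conj hh hj]; omega
  · rw [colExcess, hh.2 j hj,
      Nat.sub_eq_zero_of_le (conj_le_of_durfee_le (ofExcess_sorted hg) (durfee_ofExcess hg) hj)]

include hh in
lemma sum_ofExcess :
    (ofExcess k g h).sum = k * k + ∑ i ∈ range k, g i + ∑ i ∈ range k, h i := by
  have hcols : ∑ r ∈ range (h 0), #{j ∈ range k | r < h j} = ∑ j ∈ range k, h j := by
    simp_rw [card_filter]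
    rw [sum_comm]
    refine sum_congr rfl fun j _ => ?_
    rw [← card_filter, ← countP_range_eq_card_filter, countP_range_lt,
      min_eq_right (hh.1 (Nat.zero_le j))]
  rw [ofExcess, List.sum_append, sum_map_range, sum_map_range, sum_add_distrib, sum_const,
    card_range, smul_eq_mul]
  simp_rw [countP_range_eq_card_filter]
  rw [hcols]

end OfExcess

section Reconstruction

variable {L : List ℕ} {k : ℕ} (hL : L.Pairwise (· ≥ ·)) (hpos : ∀ x ∈ L, 0 < x)
  (hd : durfee L = k) (hk : 0 < k)
include hL hpos hd hk

lemma ofExcess_excess : ofExcess k (rowExcess L k) (colExcess L k) = L := by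
  have hg := isProfile_rowExcess hL hd
  have hh := isProfile_colExcess hL hd
  refine eq_of_getD_eq (ofExcess_pos hk) hpos fun i => ?_
  rcases lt_or_ge i k with hi | hi
  · rw [ofExcess_getD_of_lt hi, getD_eq_add_rowExcess hL hd hk hi]
  · -- below the square, a row is determined by the lengths of the first `k` columns
    refine eq_of_forall_lt_iff fun j => ?_
    have := ofExcess_getD_le (g := rowExcess L k) (h := colExcess L k) hi
    have := getD_le_of_durfee_le hL hd hi
    rcases lt_or_ge j k with hj | hj
    · rw [lt_getD_iff_lt_conj (ofExcess_sorted hg), lt_getD_iff_lt_conj hL, ofExcess_conj hh hj,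
        conj_eq_add_colExcess hL hd hk hj]
    · omega

lemma sum_eq_of_durfee :
    L.sum = k * k + ∑ i ∈ range k, rowExcess L k i + ∑ i ∈ range k, colExcess L k i := by
  rw [← sum_ofExcess (isProfile_colExcess hL hd), ofExcess_excess hL hpos hd hk]

end Reconstruction

/-- The parts `2k - 1, 2k - 3, …, 1` of the least Rogers–Ramanujan partition into `k` parts. -/
def stair (k i : ℕ) : ℕ := 2 * (k - 1 - i) + 1

def rrExcess (L : List ℕ) (k i : ℕ) : ℕ := L.getD i 0 - stair k i

def ofRRExcess (k : ℕ) (e : ℕ → ℕ) : List ℕ := (List.range k).map fun i => stair k i + e i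

lemma sum_stair (k : ℕ) : ∑ i ∈ range k, stair k i = k * k := by
  induction k with
  | zero => rfl
  | succ k ih =>
    have hshift : ∀ i ∈ range k, stair (k + 1) (i + 1) = stair k i := fun i hi => by
      simp only [stair]; have := mem_range.mp hi; omega
    rw [sum_range_succ', sum_congr rfl hshift, ih, stair, Nat.add_sub_cancel, Nat.sub_zero]
    ring

lemma sum_ofRRExcess (k : ℕ) (e : ℕ → ℕ) :
    (ofRRExcess k e).sum = k * k + ∑ i ∈ range k, e i := by
  rw [ofRRExcess, sum_map_range, sum_add_distrib, sum_stair]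

section RogersRamanujan

variable {L : List ℕ} {k : ℕ} (hL : RR L k)
include hL

lemma stair_le_getD {i : ℕ} (hi : i < k) : stair k i ≤ L.getD i 0 := by
  induction i using forall_of_forall_ge_of_step (k := k) with
  | ge i hi' => omega
  | step i _ ih =>
    rcases lt_or_ge (i + 1) k with hi' | hi'
    · have := ih hi'
      have := hL.2.1 i hi'
      simp only [stair] at *
      omega
    · have := hL.2.2
      rw [show k - 1 = i by omega] at this
      simp only [stair]
      omega

lemma getD_eq_stair_add_rrExcess {i : ℕ} (hi : i < k) :
    L.getD i 0 = stair k i + rrExcess L k i := by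
  have := stair_le_getD hL hi
  rw [rrExcess]
  omega

lemma isProfile_rrExcess : IsProfile k (rrExcess L k) := by
  have hzero : ∀ i, k ≤ i → rrExcess L k i = 0 := fun i hi => by
    rw [rrExcess, List.getD_eq_default _ _ (hL.1 ▸ hi), Nat.zero_sub]
  refine ⟨antitone_nat_of_succ_le fun i => ?_, hzero⟩
  rcases lt_or_ge (i + 1) k with hi | hi
  · have := getD_eq_stair_add_rrExcess hL hi
    have := getD_eq_stair_add_rrExcess hL (show i < k by omega)
    have := hL.2.1 i hi
    simp only [stair] at *
    omega
  · rw [hzero _ hi]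
    exact Nat.zero_le _

lemma ofRRExcess_rrExcess : ofRRExcess k (rrExcess L k) = L := by
  refine List.ext_getElem (by simp [ofRRExcess, hL.1]) fun i h₁ h₂ => ?_
  simp only [ofRRExcess, List.length_map, List.length_range] at h₁
  rw [← List.getD_eq_getElem _ 0 h₂, getD_eq_stair_add_rrExcess hL h₁]
  simp [ofRRExcess]

lemma sum_eq_of_RR : L.sum = k * k + ∑ i ∈ range k, rrExcess L k i := by
  conv_lhs => rw [← ofRRExcess_rrExcess hL]
  exact sum_ofRRExcess k _

lemma pos_of_RR : 0 < k := by
  by_contra! hk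
  have := hL.2.2
  rw [List.getD_eq_default _ _ (by rw [hL.1]; omega)] at this
  omega

lemma tRR_eq_card_descents : tRR L k = #(descents k (rrExcess L k)) := by
  obtain ⟨m, rfl⟩ : ∃ m, k = m + 1 := ⟨k - 1, by have := pos_of_RR hL; omega⟩
  have hlast : rrExcess L (m + 1) (m + 1) < rrExcess L (m + 1) m ↔ 1 < L.getD m 0 := by
    rw [(isProfile_rrExcess hL).2 _ le_rfl, rrExcess, stair]
    omega
  have hgaps : {i ∈ range m | rrExcess L (m + 1) (i + 1) < rrExcess L (m + 1) i} =
      {i ∈ range m | L.getD (i + 1) 0 + 2 < L.getD i 0} := filter_congr fun i hi => by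
    have := mem_range.mp hi
    have := getD_eq_stair_add_rrExcess hL (show i < m + 1 by omega)
    have := getD_eq_stair_add_rrExcess hL (show i + 1 < m + 1 by omega)
    simp only [stair] at *
    omega
  rw [tRR, descents, range_add_one, filter_insert, Nat.add_sub_cancel, ← hgaps]
  by_cases h : 1 < L.getD m 0
  · rw [if_pos (hlast.mpr h), if_pos h, card_insert_of_notMem (by simp)]
  · rw [if_neg (mt hlast.mp h), if_neg h, add_zero]

end RogersRamanujan

section OfRRExcess

variable {k : ℕ} {e : ℕ → ℕ} (he : IsProfile k e)

lemma ofRRExcess_getD {i : ℕ} (hi : i < k) : (ofRRExcess k e).getD i 0 = stair k i + e i := by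
  rw [ofRRExcess, List.getD_eq_getElem _ _ (by simpa using hi)]
  simp

lemma ofRRExcess_pos : ∀ x ∈ ofRRExcess k e, 0 < x := by
  simp only [ofRRExcess, List.mem_map]
  rintro _ ⟨i, -, rfl⟩
  exact Nat.add_pos_left (Nat.succ_pos _) _

include he

lemma ofRRExcess_sorted : (ofRRExcess k e).Pairwise (· ≥ ·) :=
  pairwise_map_range (fun i j hij => by
    have : e j ≤ e i := he.1 hij
    simp only [stair]
    omega) k

lemma RR_ofRRExcess (hk : 0 < k) : RR (ofRRExcess k e) k := by
  refine ⟨by simp [ofRRExcess], fun i hi => ?_, ?_⟩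
  · have : e (i + 1) ≤ e i := he.1 (Nat.le_succ i)
    rw [ofRRExcess_getD hi, ofRRExcess_getD (by omega : i < k)]
    simp only [stair]
    omega
  · rw [ofRRExcess_getD (by omega), stair]
    omega

lemma rrExcess_ofRRExcess : rrExcess (ofRRExcess k e) k = e := funext fun i => by
  rcases lt_or_ge i k with hi | hi
  · rw [rrExcess, ofRRExcess_getD hi]
    omega
  · rw [rrExcess, he.2 i hi, List.getD_eq_default _ _ (by simpa [ofRRExcess] using hi),
      Nat.zero_sub]

end OfRRExcess

/-- The partition of `n` with parts `L`; a junk value unless `L` sums to `n`. -/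
def ofList (n : ℕ) (L : List ℕ) : n.Partition :=
  if h : L.sum = n then Nat.Partition.ofSums n L (by simpa using h) else Nat.Partition.indiscrete n

section Parts

variable {n : ℕ}

lemma sparts_sorted (π : n.Partition) : (sparts π).Pairwise (· ≥ ·) :=
  π.parts.pairwise_sort _

lemma coe_sparts (π : n.Partition) : (sparts π : Multiset ℕ) = π.parts :=
  π.parts.sort_eq _

lemma sparts_pos (π : n.Partition) : ∀ x ∈ sparts π, 0 < x := fun x hx =>
  π.parts_pos (by rw [← coe_sparts]; exact_mod_cast hx)

lemma sum_sparts (π : n.Partition) : (sparts π).sum = n := by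
  rw [← Multiset.sum_coe, coe_sparts, π.parts_sum]

lemma sparts_injective : Function.Injective (sparts (n := n)) := fun π π' h =>
  Nat.Partition.ext (by rw [← coe_sparts, ← coe_sparts, h])

lemma sparts_ofList {L : List ℕ} (hL : L.Pairwise (· ≥ ·)) (hpos : ∀ x ∈ L, 0 < x)
    (hsum : L.sum = n) : sparts (ofList n L) = L := by
  refine List.Perm.eq_of_pairwise' (sparts_sorted _) hL ?_
  rw [← Multiset.coe_eq_coe, coe_sparts, ofList, dif_pos hsum, Nat.Partition.ofSums_parts,
    Multiset.filter_eq_self.mpr fun x hx => (hpos x hx).ne']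

lemma ofList_sparts (π : n.Partition) : ofList n (sparts π) = π :=
  sparts_injective (sparts_ofList (sparts_sorted π) (sparts_pos π) (sum_sparts π))

lemma sig_sparts_le (π : n.Partition) : sig (sparts π) ≤ n :=
  (List.dedup_sublist _).length_le.trans <| (List.drop_sublist _ _).length_le.trans <|
    (List.length_le_sum_of_one_le _ (sparts_pos π)).trans_eq (sum_sparts π)

end Parts

section Basis

variable {n k : ℕ} {π : n.Partition} (hd : durfee (sparts π) = k) (hk : 0 < k)
include hd hk

lemma isBasis_of_disjoint
    (hdisj : Disjoint (descents k (rowExcess (sparts π) k))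
      (descents k (colExcess (sparts π) k))) :
    IsBasis π := by
  intro m π' hr
  have hd' : durfee (sparts π') = k := by simpa [ranks, hd] using congrArg List.length hr
  have hg := isProfile_rowExcess (sparts_sorted π) hd
  have hh := isProfile_colExcess (sparts_sorted π) hd
  have hg' := isProfile_rowExcess (sparts_sorted π') hd'
  have hh' := isProfile_colExcess (sparts_sorted π') hd'
  rw [ranks_eq_map_excess (sparts_sorted π') hd' hk, ranks_eq_map_excess (sparts_sorted π) hd hk,
    List.map_inj_left] at hr
  have heq : ∀ i, rowExcess (sparts π) k i + colExcess (sparts π') k i =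
      rowExcess (sparts π') k i + colExcess (sparts π) k i := fun i => by
    rcases lt_or_ge i k with hi | hi
    · have := hr i (List.mem_range.mpr hi)
      omega
    · rw [hg.2 i hi, hh.2 i hi, hg'.2 i hi, hh'.2 i hi]
  have hle := le_of_add_eq_add hg hh hg'.1 hh'.1 hdisj heq
  rw [← sum_sparts π, ← sum_sparts π',
    sum_eq_of_durfee (sparts_sorted π) (sparts_pos π) hd hk,
    sum_eq_of_durfee (sparts_sorted π') (sparts_pos π') hd' hk]
  gcongr with i
  · exact (hle i).1
  · exact (hle i).2

/-- At a common descent `i`, shortening each of the first `i + 1` rows right of the Durfee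
square and columns below it by one cell keeps the successive ranks and lowers `n`. -/
lemma disjoint_of_isBasis (hb : IsBasis π) :
    Disjoint (descents k (rowExcess (sparts π) k)) (descents k (colExcess (sparts π) k)) := by
  refine disjoint_left.mpr fun i hig hih => ?_
  have hi : i < k := mem_range.mp (mem_filter.mp hig).1
  have hL := sparts_sorted π
  obtain ⟨g', hg', hg'eq⟩ := (isProfile_rowExcess hL hd).exists_eq_add_indicator hig
  obtain ⟨h', hh', hh'eq⟩ := (isProfile_colExcess hL hd).exists_eq_add_indicator hih
  have hL' := ofExcess_sorted hg' (h := h')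
  have hr : ranks (sparts (ofList (ofExcess k g' h').sum (ofExcess k g' h'))) =
      ranks (sparts π) := by
    rw [sparts_ofList hL' (ofExcess_pos hk) rfl, ranks_eq_map_excess hL' (durfee_ofExcess hg') hk,
      ranks_eq_map_excess hL hd hk, rowExcess_ofExcess hg', colExcess_ofExcess hg' hh',
      List.map_inj_left]
    intro j _
    rw [hg'eq j, hh'eq j]
    push_cast
    ring
  have hsmaller := hb _ _ hr
  have hprefix : ∑ j ∈ range k, (if j ≤ i then 1 else 0) = i + 1 := by
    rw [sum_boole, Nat.cast_id, show {j ∈ range k | j ≤ i} = range (i + 1) by ext; simp; omega,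
      card_range]
  have hsum := sum_eq_of_durfee hL (sparts_pos π) hd hk
  simp only [hg'eq, hh'eq, sum_add_distrib, hprefix, sum_sparts] at hsum
  rw [sum_ofExcess hh'] at hsmaller
  omega

end Basis

section Correspondence

variable {n k : ℕ}

def toRR (k : ℕ) (π : n.Partition) : n.Partition :=
  ofList n (ofRRExcess k (rowExcess (sparts π) k + colExcess (sparts π) k))

def ofRR (k : ℕ) (ρ : n.Partition) (S : Finset ℕ) : n.Partition :=
  ofList n (ofExcess k (rrExcess (sparts ρ) k - descentPart (rrExcess (sparts ρ) k) S)
    (descentPart (rrExcess (sparts ρ) k) S))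

section ToRR

variable {π : n.Partition} (hd : durfee (sparts π) = k) (hk : 0 < k)
include hd

lemma isProfile_excess_add : IsProfile k (rowExcess (sparts π) k + colExcess (sparts π) k) :=
  (isProfile_rowExcess (sparts_sorted π) hd).add (isProfile_colExcess (sparts_sorted π) hd)

include hk

lemma sparts_toRR :
    sparts (toRR k π) = ofRRExcess k (rowExcess (sparts π) k + colExcess (sparts π) k) := by
  refine sparts_ofList (ofRRExcess_sorted (isProfile_excess_add hd)) ofRRExcess_pos ?_
  simp only [sum_ofRRExcess, Pi.add_apply, sum_add_distrib]
  rw [← add_assoc, ← sum_eq_of_durfee (sparts_sorted π) (sparts_pos π) hd hk, sum_sparts]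

lemma RR_toRR : RR (sparts (toRR k π)) k := by
  rw [sparts_toRR hd hk]
  exact RR_ofRRExcess (isProfile_excess_add hd) hk

lemma rrExcess_toRR :
    rrExcess (sparts (toRR k π)) k = rowExcess (sparts π) k + colExcess (sparts π) k := by
  rw [sparts_toRR hd hk, rrExcess_ofRRExcess (isProfile_excess_add hd)]

end ToRR

section OfRR

variable {ρ : n.Partition} {S : Finset ℕ} (hρ : RR (sparts ρ) k)
  (hS : S ⊆ descents k (rrExcess (sparts ρ) k))
include hρ hS

lemma sparts_ofRR : sparts (ofRR k ρ S) =
    ofExcess k (rrExcess (sparts ρ) k - descentPart (rrExcess (sparts ρ) k) S)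
      (descentPart (rrExcess (sparts ρ) k) S) := by
  have he := isProfile_rrExcess hρ
  refine sparts_ofList (ofExcess_sorted (isProfile_sub_descentPart he hS))
    (ofExcess_pos (pos_of_RR hρ)) ?_
  rw [sum_ofExcess (isProfile_descentPart hS), add_assoc, ← sum_add_distrib]
  simp only [Pi.sub_apply, Nat.sub_add_cancel (descentPart_le he hS _)]
  rw [← sum_eq_of_RR hρ, sum_sparts]

lemma durfee_ofRR : durfee (sparts (ofRR k ρ S)) = k := by
  rw [sparts_ofRR hρ hS]
  exact durfee_ofExcess (isProfile_sub_descentPart (isProfile_rrExcess hρ) hS)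

lemma rowExcess_ofRR : rowExcess (sparts (ofRR k ρ S)) k =
    rrExcess (sparts ρ) k - descentPart (rrExcess (sparts ρ) k) S := by
  rw [sparts_ofRR hρ hS]
  exact rowExcess_ofExcess (isProfile_sub_descentPart (isProfile_rrExcess hρ) hS)

lemma colExcess_ofRR :
    colExcess (sparts (ofRR k ρ S)) k = descentPart (rrExcess (sparts ρ) k) S := by
  rw [sparts_ofRR hρ hS]
  exact colExcess_ofExcess (isProfile_sub_descentPart (isProfile_rrExcess hρ) hS)
    (isProfile_descentPart hS)

lemma isBasis_ofRR : IsBasis (ofRR k ρ S) := by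
  refine isBasis_of_disjoint (durfee_ofRR hρ hS) (pos_of_RR hρ) ?_
  rw [rowExcess_ofRR hρ hS, colExcess_ofRR hρ hS]
  exact disjoint_descents_descentPart (isProfile_rrExcess hρ) hS

lemma descents_colExcess_ofRR : descents k (colExcess (sparts (ofRR k ρ S)) k) = S := by
  rw [colExcess_ofRR hρ hS, descents_descentPart (isProfile_rrExcess hρ) hS]

lemma toRR_ofRR : toRR k (ofRR k ρ S) = ρ := by
  rw [toRR, rowExcess_ofRR hρ hS, colExcess_ofRR hρ hS,
    tsub_add_cancel_of_le fun i => descentPart_le (isProfile_rrExcess hρ) hS i,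
    ofRRExcess_rrExcess hρ, ofList_sparts]

end OfRR

lemma ofRR_toRR {π : n.Partition} (hb : IsBasis π) (hd : durfee (sparts π) = k) (hk : 0 < k) :
    ofRR k (toRR k π) (descents k (colExcess (sparts π) k)) = π := by
  have hg := isProfile_rowExcess (sparts_sorted π) hd
  have hh := isProfile_colExcess (sparts_sorted π) hd
  rw [ofRR, rrExcess_toRR hd hk, descentPart_add hg hh (disjoint_of_isBasis hd hk hb),
    add_tsub_cancel_right, ofExcess_excess (sparts_sorted π) (sparts_pos π) hd hk, ofList_sparts]

end Correspondence

theorem sum_isBasis_eq_sum_RR {M : Type*} [AddCommMonoid M] (f : ℕ → M) (n : ℕ) {k : ℕ}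
    (hk : 0 < k) :
    ∑ π : n.Partition with IsBasis π ∧ durfee (sparts π) = k, f (sig (sparts π)) =
      ∑ p ∈ ({ρ : n.Partition | RR (sparts ρ) k} : Finset _).sigma
        (fun ρ => (descents k (rrExcess (sparts ρ) k)).powerset), f #p.2 := by
  refine sum_nbij' (fun π => ⟨toRR k π, descents k (colExcess (sparts π) k)⟩)
    (fun p => ofRR k p.1 p.2) ?_ ?_ ?_ ?_ ?_
  all_goals simp only [mem_filter, mem_univ, true_and, mem_sigma, mem_powerset]
  · rintro π ⟨-, hd⟩
    refine ⟨RR_toRR hd hk, ?_⟩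
    rw [rrExcess_toRR hd hk]
    exact descents_subset_descents_add (isProfile_rowExcess (sparts_sorted π) hd).1
  · rintro ⟨ρ, S⟩ ⟨hρ, hS⟩
    exact ⟨isBasis_ofRR hρ hS, durfee_ofRR hρ hS⟩
  · rintro π ⟨hb, hd⟩
    exact ofRR_toRR hb hd hk
  · rintro ⟨ρ, S⟩ ⟨hρ, hS⟩
    rw [toRR_ofRR hρ hS, descents_colExcess_ofRR hρ hS]
  · rintro π ⟨-, hd⟩
    rw [sig_eq_card_descents (sparts_sorted π) hd (sparts_pos π)]

lemma bCount3_eq_card (n k s : ℕ) : bCount3 n k s =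
    #{π : n.Partition | IsBasis π ∧ durfee (sparts π) = k ∧ sig (sparts π) = s} := by
  rw [bCount3, Nat.card_eq_fintype_card, Fintype.card_subtype]

open Polynomial in
lemma sum_C_bCount3_mul_X_pow (n k : ℕ) :
    ∑ s ∈ range (n + 1), C (bCount3 n k s : ℤ) * X ^ s =
      ∑ π : n.Partition with IsBasis π ∧ durfee (sparts π) = k, X ^ sig (sparts π) := by
  rw [← sum_fiberwise_of_maps_to fun π _ => mem_range.mpr (Nat.lt_succ_of_le (sig_sparts_le π))]
  refine sum_congr rfl fun s _ => ?_
  rw [sum_congr rfl fun π hπ => by rw [(mem_filter.mp hπ).2], sum_const, filter_filter,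
    bCount3_eq_card, nsmul_eq_mul, ← C_eq_natCast]
  simp only [and_assoc]

theorem statement6_general (n k : ℕ) (hk : 0 < k) :
    (∑ s ∈ Finset.range (n + 1), Polynomial.C (bCount3 n k s : ℤ) * Polynomial.X ^ s) =
      ∑ π ∈ Finset.univ.filter (fun π : n.Partition => RR (sparts π) k),
        (1 + Polynomial.X) ^ tRR (sparts π) k := by
  rw [sum_C_bCount3_mul_X_pow, sum_isBasis_eq_sum_RR _ n hk, sum_sigma]
  refine sum_congr rfl fun ρ hρ => ?_
  rw [tRR_eq_card_descents (mem_filter.mp hρ).2, add_comm, ← sum_pow_mul_eq_add_pow]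
  simp

theorem statement6 (n k : ℕ) (hn : 0 < n) (hk : 0 < k) :
    (∑ s ∈ Finset.range (n + 1), Polynomial.C (bCount3 n k s : ℤ) * Polynomial.X ^ s) =
      ∑ π ∈ Finset.univ.filter (fun π : n.Partition => RR (sparts π) k),
        (1 + Polynomial.X) ^ tRR (sparts π) k :=
  statement6_general n k hk

end BasisPartitions
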